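/- arXiv:1006.0906 — 5 statements merged into one kernel-verified Lean document; each statement's English description precedes it below -/
import Mathlib

section
/- Let γ be real with |γ| < π/2, 0 ≤ β < 1, λ ∈ D, and let P be analytic on D with P(0)=1, Re(e^{iγ}P(z)) > β cos γ, and P'(0) = 2(1-β)e^{-iγ}λ cos γ. Then for all z ∈ D: |P(z) - c(z,λ)| ≤ r(z,λ), where c(z,λ) = [(1+λz(e^{-iγ}-2β cos γ)e^{-iγ})(1-conj(λ)conj(z)) + |z|²(conj(z)-λ)(conj(λ)+z(e^{-iγ}-2β cos γ)e^{-iγ})] / [(1-|z|²)(1+|z|²-2Re(λz))] and r(z,λ) = 2(1-|λ|²)(1-β)|z|² cos γ / [(1-|z|²)(1+|z|²-2Re(λz))]. -/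
/-!
Put `A = e^{-iγ} (e^{-iγ} - 2β cos γ)`. The condition `Re (e^{iγ} P) > β cos γ` says exactly that
`|P - 1| < |P + A|`, so `ω = (P - 1) / (P + A)` is a Schwarz function, and the normalization of
`P'(0)` gives `ω'(0) = λ`. The Schwarz lemma applied to the Möbius transform of `ω(z) / z` that
vanishes at `0` confines `ω(z)` to the closed disk `|ω(z) - λz| ≤ |z| |z - λ̄ ω(z)|`. Since
`P = (1 + Aω) / (1 - ω)`, the value `P(z)` lies in the image of this disk under a Möbius map,
which is the disk with center `c(z, λ)` and radius `r(z, λ)`.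
-/

open Complex Metric Set

open ComplexConjugate

lemma norm_mul_sub_sq_le {B U : ℂ} {ρ : ℝ} (hρ : 0 ≤ ρ) (hU : ‖U‖ ≤ ρ) (hB : ρ ≤ ‖B‖) :
    ‖B * U - (ρ : ℂ) ^ 2‖ ≤ ρ * ‖B - conj U‖ := by
  have key : ρ ^ 2 * ‖B - conj U‖ ^ 2 - ‖B * U - (ρ : ℂ) ^ 2‖ ^ 2
      = (‖B‖ ^ 2 - ρ ^ 2) * (ρ ^ 2 - ‖U‖ ^ 2) := by
    apply ofReal_injective
    push_cast
    simp only [← mul_conj', map_sub, map_mul, conj_conj, conj_ofReal, map_pow]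
    ring
  have hBρ : ρ ^ 2 ≤ ‖B‖ ^ 2 := pow_le_pow_left₀ hρ hB 2
  have hUρ : ‖U‖ ^ 2 ≤ ρ ^ 2 := pow_le_pow_left₀ (norm_nonneg U) hU 2
  refine (pow_le_pow_iff_left₀ (norm_nonneg _) (by positivity) two_ne_zero).1 ?_
  nlinarith [mul_nonneg (sub_nonneg.2 hBρ) (sub_nonneg.2 hUρ)]

lemma norm_sub_le_norm_one_sub_conj_mul {a w : ℂ} (ha : ‖a‖ ≤ 1) (hw : ‖w‖ ≤ 1) :
    ‖w - a‖ ≤ ‖1 - conj a * w‖ := by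
  have key : ‖1 - conj a * w‖ ^ 2 - ‖w - a‖ ^ 2 = (1 - ‖a‖ ^ 2) * (1 - ‖w‖ ^ 2) := by
    apply ofReal_injective
    push_cast
    simp only [← mul_conj', map_sub, map_mul, conj_conj, map_one]
    ring
  have ha2 : ‖a‖ ^ 2 ≤ 1 := pow_le_one₀ (norm_nonneg a) ha
  have hw2 : ‖w‖ ^ 2 ≤ 1 := pow_le_one₀ (norm_nonneg w) hw
  refine (pow_le_pow_iff_left₀ (norm_nonneg _) (norm_nonneg _) two_ne_zero).1 ?_
  nlinarith [mul_nonneg (sub_nonneg.2 ha2) (sub_nonneg.2 hw2)]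

lemma one_sub_conj_mul_ne_zero {a w : ℂ} (ha : ‖a‖ < 1) (hw : ‖w‖ ≤ 1) : 1 - conj a * w ≠ 0 := by
  refine sub_ne_zero.2 (ne_of_apply_ne norm ?_)
  rw [norm_one, norm_mul, norm_conj]
  exact (mul_lt_one_of_nonneg_of_lt_one_left (norm_nonneg a) ha hw).ne'

theorem norm_sub_mul_le_of_mapsTo_ball {ω : ℂ → ℂ} {a z : ℂ}
    (hd : DifferentiableOn ℂ ω (ball 0 1)) (hmaps : MapsTo ω (ball 0 1) (closedBall 0 1))
    (h₀ : ω 0 = 0) (ha : deriv ω 0 = a) (ha1 : ‖a‖ < 1) (hz : z ∈ ball (0 : ℂ) 1) :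
    ‖ω z - a * z‖ ≤ ‖z‖ * ‖z - conj a * ω z‖ := by
  set g := dslope ω 0
  have hg : MapsTo g (ball 0 1) (closedBall 0 1) := fun ζ hζ ↦ by
    simpa using norm_dslope_le_div_of_mapsTo_ball hd (by rwa [h₀]) hζ
  have hden : ∀ ζ ∈ ball (0 : ℂ) 1, 1 - conj a * g ζ ≠ 0 := fun ζ hζ ↦
    one_sub_conj_mul_ne_zero ha1 (mem_closedBall_zero_iff.1 (hg hζ))
  set h := fun ζ ↦ (g ζ - a) / (1 - conj a * g ζ)
  have hhd : DifferentiableOn ℂ h (ball 0 1) := by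
    have hgd : DifferentiableOn ℂ g (ball 0 1) :=
      (differentiableOn_dslope (isOpen_ball.mem_nhds (mem_ball_self one_pos))).2 hd
    exact (hgd.sub_const a).div ((hgd.const_mul _).const_sub 1) hden
  have hh : MapsTo h (ball 0 1) (closedBall 0 1) := fun ζ hζ ↦ by
    rw [mem_closedBall_zero_iff, norm_div, div_le_one (norm_pos_iff.2 (hden ζ hζ))]
    exact norm_sub_le_norm_one_sub_conj_mul ha1.le (mem_closedBall_zero_iff.1 (hg hζ))
  have hh₀ : h 0 = 0 := by simp [h, g, ha]
  have hschwarz := norm_le_norm_of_mapsTo_ball hhd hh hh₀ (mem_ball_zero_iff.1 hz)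
  rw [norm_div, div_le_iff₀ (norm_pos_iff.2 (hden z hz))] at hschwarz
  have hωg : ω z = z * g z := by simpa [h₀] using (sub_smul_dslope ω 0 z).symm
  calc ‖ω z - a * z‖ = ‖z‖ * ‖g z - a‖ := by rw [hωg, ← norm_mul]; ring_nf
    _ ≤ ‖z‖ * (‖z‖ * ‖1 - conj a * g z‖) := by gcongr
    _ = ‖z‖ * ‖z - conj a * ω z‖ := by rw [hωg, ← norm_mul]; ring_nf

/-- The common denominator of `c(z, λ)` and `r(z, λ)`. -/
noncomputable def diskDenom (z lam : ℂ) : ℝ := (1 - ‖z‖ ^ 2) * (1 + ‖z‖ ^ 2 - 2 * (lam * z).re)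

lemma ofReal_diskDenom (z lam : ℂ) :
    (diskDenom z lam : ℂ) = (1 - z * conj z) * (1 + z * conj z - (lam * z + conj lam * conj z)) := by
  rw [diskDenom]
  push_cast
  rw [re_eq_add_conj, ← mul_conj', map_mul]
  ring

lemma diskDenom_pos {z lam : ℂ} (hz : ‖z‖ < 1) (hlam : ‖lam‖ ≤ 1) : 0 < diskDenom z lam := by
  have hre : (lam * z).re ≤ ‖z‖ := by
    calc (lam * z).re ≤ ‖lam * z‖ := re_le_norm _
      _ ≤ ‖z‖ := by rw [norm_mul]; exact mul_le_of_le_one_left (norm_nonneg z) hlam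
  have h0 := norm_nonneg z
  refine mul_pos (by nlinarith) ?_
  nlinarith [sq_pos_of_pos (sub_pos.2 hz)]

theorem norm_diskDenom_sub_mul_le {z lam w : ℂ} (hz : ‖z‖ < 1) (hlam : ‖lam‖ ≤ 1)
    (hw : ‖w - lam * z‖ ≤ ‖z‖ * ‖z - conj lam * w‖) :
    ‖(diskDenom z lam : ℂ) - (1 - w) *
        (1 - (‖lam‖ : ℂ) ^ 2 * (‖z‖ : ℂ) ^ 2 - (1 - (‖z‖ : ℂ) ^ 2) * conj lam * conj z)‖ ≤
      ‖z‖ ^ 2 * (1 - ‖lam‖ ^ 2) * ‖1 - w‖ := by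
  set t : ℝ := 1 - ‖lam‖ ^ 2 * ‖z‖ ^ 2
  set ρ : ℝ := ‖z‖ ^ 2 * (1 - ‖lam‖ ^ 2)
  have hx1 : ‖z‖ ^ 2 < 1 := pow_lt_one₀ (norm_nonneg z) hz two_ne_zero
  have hm1 : ‖lam‖ ^ 2 ≤ 1 := pow_le_one₀ (norm_nonneg lam) hlam
  have ht : 0 < t := by nlinarith [sq_nonneg ‖z‖, sq_nonneg ‖lam‖]
  have hρ : 0 ≤ ρ := mul_nonneg (sq_nonneg _) (sub_nonneg.2 hm1)
  set B : ℂ := 1 - (‖lam‖ : ℂ) ^ 2 * (‖z‖ : ℂ) ^ 2 - (1 - (‖z‖ : ℂ) ^ 2) * conj lam * conj z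
  set U : ℂ := t * w - (1 - (‖z‖ : ℂ) ^ 2) * lam * z
  -- After multiplying by `t`, the claim is `norm_mul_sub_sq_le` for `B` and `U`: the hypothesis
  -- on `w` becomes `‖U‖ ≤ ρ`, and `‖B‖² - ρ² = t D ≥ 0`.
  have hBU : (t : ℂ) * (diskDenom z lam - (1 - w) * B) = B * U - (ρ : ℂ) ^ 2 := by
    simp only [ofReal_diskDenom, B, U, t, ρ]
    push_cast
    simp only [← mul_conj']
    ring
  have hB : ‖B‖ ^ 2 - ρ ^ 2 = t * diskDenom z lam := by
    apply ofReal_injective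
    simp only [B, t, ρ]
    push_cast
    simp only [ofReal_diskDenom, ← mul_conj', map_sub, map_mul, map_one, conj_conj]
    ring
  have hU : ρ ^ 2 - ‖U‖ ^ 2 = t * (‖z‖ ^ 2 * ‖z - conj lam * w‖ ^ 2 - ‖w - lam * z‖ ^ 2) := by
    apply ofReal_injective
    simp only [U, t, ρ]
    push_cast
    simp only [← mul_conj', map_sub, map_mul, map_one, conj_conj]
    ring
  have hconj : ‖B - conj U‖ = t * ‖1 - w‖ := by
    have : B - conj U = t * conj (1 - w) := by
      simp only [B, U, t]
      push_cast
      simp only [← mul_conj', map_sub, map_mul, map_one, conj_conj]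
      ring
    rw [this, norm_mul, norm_real, Real.norm_of_nonneg ht.le, norm_conj]
  have hUρ : ‖U‖ ≤ ρ := by
    refine (pow_le_pow_iff_left₀ (norm_nonneg U) hρ two_ne_zero).1 ?_
    have := pow_le_pow_left₀ (norm_nonneg _) hw 2
    nlinarith
  have hρB : ρ ≤ ‖B‖ := by
    refine (pow_le_pow_iff_left₀ hρ (norm_nonneg B) two_ne_zero).1 ?_
    nlinarith [diskDenom_pos hz hlam]
  refine le_of_mul_le_mul_left ?_ ht
  calc t * ‖(diskDenom z lam : ℂ) - (1 - w) * B‖ = ‖B * U - (ρ : ℂ) ^ 2‖ := by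
        rw [← hBU, norm_mul, norm_real, Real.norm_of_nonneg ht.le]
    _ ≤ ρ * ‖B - conj U‖ := norm_mul_sub_sq_le hρ hUρ hρB
    _ = t * (ρ * ‖1 - w‖) := by rw [hconj]; ring

theorem norm_div_one_sub_sub_le {A z lam w : ℂ} (hz : ‖z‖ < 1) (hlam : ‖lam‖ ≤ 1) (hw1 : w ≠ 1)
    (hw : ‖w - lam * z‖ ≤ ‖z‖ * ‖z - conj lam * w‖) :
    ‖(1 + A * w) / (1 - w) - ((1 + lam * z * A) * (1 - conj lam * conj z) +
        (‖z‖ ^ 2 : ℝ) * (conj z - lam) * (conj lam + z * A)) / (diskDenom z lam : ℂ)‖ ≤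
      ‖1 + A‖ * (‖z‖ ^ 2 * (1 - ‖lam‖ ^ 2)) / diskDenom z lam := by
  set B : ℂ := 1 - (‖lam‖ : ℂ) ^ 2 * (‖z‖ : ℂ) ^ 2 - (1 - (‖z‖ : ℂ) ^ 2) * conj lam * conj z
  have hD := diskDenom_pos hz hlam
  have hD' : (diskDenom z lam : ℂ) ≠ 0 := ofReal_ne_zero.2 hD.ne'
  have hw1' : 1 - w ≠ 0 := sub_ne_zero.2 (Ne.symm hw1)
  have hcenter : (1 + lam * z * A) * (1 - conj lam * conj z) +
      (‖z‖ ^ 2 : ℝ) * (conj z - lam) * (conj lam + z * A) = (1 + A) * B - A * diskDenom z lam := by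
    simp only [B, ofReal_diskDenom]
    push_cast
    simp only [← mul_conj']
    ring
  have hsplit : (1 + A * w) / (1 - w) - ((1 + A) * B - A * diskDenom z lam) / (diskDenom z lam : ℂ)
      = (1 + A) * ((diskDenom z lam : ℂ) - (1 - w) * B) / ((1 - w) * diskDenom z lam) := by
    field_simp
    ring
  rw [hcenter, hsplit, norm_div, norm_mul, norm_mul, norm_real, Real.norm_of_nonneg hD.le,
    div_le_div_iff₀ (by positivity) hD]
  calc ‖1 + A‖ * ‖(diskDenom z lam : ℂ) - (1 - w) * B‖ * diskDenom z lam
      ≤ ‖1 + A‖ * (‖z‖ ^ 2 * (1 - ‖lam‖ ^ 2) * ‖1 - w‖) * diskDenom z lam := by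
        gcongr
        exact norm_diskDenom_sub_mul_le hz hlam hw
    _ = ‖1 + A‖ * (‖z‖ ^ 2 * (1 - ‖lam‖ ^ 2)) * (‖1 - w‖ * diskDenom z lam) := by ring

theorem norm_sub_le_of_norm_sub_one_lt_norm_add {P : ℂ → ℂ} {A lam z : ℂ}
    (hP : DifferentiableOn ℂ P (ball 0 1)) (hP0 : P 0 = 1)
    (hPA : ∀ ζ ∈ ball (0 : ℂ) 1, ‖P ζ - 1‖ < ‖P ζ + A‖) (hP'0 : deriv P 0 = lam * (1 + A))
    (hlam : ‖lam‖ < 1) (hz : z ∈ ball (0 : ℂ) 1) :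
    ‖P z - ((1 + lam * z * A) * (1 - conj lam * conj z) +
        (‖z‖ ^ 2 : ℝ) * (conj z - lam) * (conj lam + z * A)) / (diskDenom z lam : ℂ)‖ ≤
      ‖1 + A‖ * (‖z‖ ^ 2 * (1 - ‖lam‖ ^ 2)) / diskDenom z lam := by
  have hden : ∀ ζ ∈ ball (0 : ℂ) 1, P ζ + A ≠ 0 := fun ζ hζ ↦
    norm_pos_iff.1 ((norm_nonneg _).trans_lt (hPA ζ hζ))
  have h0 : (0 : ℂ) ∈ ball (0 : ℂ) 1 := mem_ball_self one_pos
  have hA : 1 + A ≠ 0 := by simpa [hP0] using hden 0 h0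
  set ω := fun ζ ↦ (P ζ - 1) / (P ζ + A)
  have hωd : DifferentiableOn ℂ ω (ball 0 1) := (hP.sub_const 1).div (hP.add_const A) hden
  have hωmaps : MapsTo ω (ball 0 1) (closedBall 0 1) := fun ζ hζ ↦ by
    rw [mem_closedBall_zero_iff, norm_div, div_le_one (norm_pos_iff.2 (hden ζ hζ))]
    exact (hPA ζ hζ).le
  have hω0 : ω 0 = 0 := by simp [ω, hP0]
  have hω'0 : deriv ω 0 = lam := by
    have hPd := (hP.differentiableAt (isOpen_ball.mem_nhds h0)).hasDerivAt
    rw [((hPd.sub_const 1).fun_div (hPd.add_const A) (hden 0 h0)).deriv, hP0, hP'0]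
    field_simp
    ring
  have hω1 : ω z ≠ 1 := fun h ↦ hA <| by
    rw [div_eq_one_iff_eq (hden z hz)] at h
    linear_combination -h
  have hPω : P z = (1 + A * ω z) / (1 - ω z) := by
    rw [eq_div_iff (sub_ne_zero.2 (Ne.symm hω1))]
    simp only [ω]
    field_simp [hden z hz]
    ring
  rw [hPω]
  exact norm_div_one_sub_sub_le (mem_ball_zero_iff.1 hz) hlam.le hω1
    (norm_sub_mul_le_of_mapsTo_ball hωd hωmaps hω0 hω'0 hlam hz)

lemma norm_sub_lt_norm_add_of_re_pos {W : ℂ} {a : ℝ} (ha : 0 < a) (hW : 0 < W.re) :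
    ‖W - a‖ < ‖W + a‖ := by
  rw [← sq_lt_sq₀ (norm_nonneg _) (norm_nonneg _), Complex.sq_norm, Complex.sq_norm,
    normSq_apply, normSq_apply]
  simp only [sub_re, add_re, sub_im, add_im, ofReal_re, ofReal_im]
  nlinarith

lemma exp_neg_ofReal_mul_I (γ : ℝ) : exp (-(γ * I)) = Real.cos γ - Real.sin γ * I := by
  rw [← neg_mul, exp_mul_I, cos_neg, sin_neg, ← ofReal_cos, ← ofReal_sin]
  ring

noncomputable def spiralConst (γ β : ℝ) : ℂ :=
  (exp (-(γ * I)) - 2 * β * Real.cos γ) * exp (-(γ * I))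

lemma one_add_spiralConst (γ β : ℝ) :
    1 + spiralConst γ β = 2 * (1 - β) * Real.cos γ * exp (-(γ * I)) := by
  have hsc : (Real.sin γ : ℂ) ^ 2 + (Real.cos γ : ℂ) ^ 2 = 1 := by
    exact_mod_cast Real.sin_sq_add_cos_sq γ
  rw [spiralConst, exp_neg_ofReal_mul_I]
  linear_combination (Real.sin γ : ℂ) ^ 2 * I_sq - hsc

lemma norm_one_add_spiralConst {γ β : ℝ} (hβ1 : β ≤ 1) (hc : 0 ≤ Real.cos γ) :
    ‖1 + spiralConst γ β‖ = 2 * (1 - β) * Real.cos γ := by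
  rw [one_add_spiralConst, ← neg_mul, ← ofReal_neg, norm_mul, norm_exp_ofReal_mul_I, mul_one]
  exact_mod_cast Real.norm_of_nonneg (by nlinarith)

lemma norm_sub_one_lt_norm_add_spiralConst {γ β : ℝ} {Q : ℂ} (hβ1 : β < 1)
    (hc : 0 < Real.cos γ) (hQ : β * Real.cos γ < (exp (γ * I) * Q).re) :
    ‖Q - 1‖ < ‖Q + spiralConst γ β‖ := by
  set W := exp (γ * I) * Q - (β * Real.cos γ : ℝ) - Real.sin γ * I
  have hW : 0 < W.re := by
    rw [sub_re, sub_re, ofReal_re, re_ofReal_mul, I_re, mul_zero, sub_zero]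
    linarith
  have hu : exp (γ * I) = Real.cos γ + Real.sin γ * I := by
    rw [exp_mul_I, ← ofReal_cos, ← ofReal_sin]
  have hsub : exp (γ * I) * (Q - 1) = W - ((1 - β) * Real.cos γ : ℝ) := by
    simp only [W, hu]
    push_cast
    ring
  have hadd : exp (γ * I) * (Q + spiralConst γ β) = W + ((1 - β) * Real.cos γ : ℝ) := by
    rw [spiralConst, mul_add, mul_comm _ (exp (-(γ * I))), ← mul_assoc, ← exp_add,
      add_neg_cancel, exp_zero, one_mul, exp_neg_ofReal_mul_I]
    simp only [W]
    push_cast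
    ring
  have h := norm_sub_lt_norm_add_of_re_pos (mul_pos (sub_pos.2 hβ1) hc) hW
  rwa [← hsub, ← hadd, norm_mul, norm_mul, norm_exp_ofReal_mul_I, one_mul, one_mul] at h

theorem stmt_5_general (γ β : ℝ) (hγ : |γ| < Real.pi / 2) (hβ1 : β < 1)
    (lam : ℂ) (hlam : norm lam < 1)
    (P : ℂ → ℂ) (hP : DifferentiableOn ℂ P (ball (0:ℂ) 1)) (hP0 : P 0 = 1)
    (hre : ∀ z ∈ ball (0:ℂ) 1, β * Real.cos γ < (Complex.exp (γ * Complex.I) * P z).re)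
    (hP'0 : deriv P 0 = 2 * (1 - β) * Complex.exp (-(γ * Complex.I)) * lam * Real.cos γ) :
    ∀ z ∈ ball (0:ℂ) 1,
      norm (P z -
        ((1 + lam * z * (Complex.exp (-(γ * Complex.I)) - 2 * β * Real.cos γ) *
            Complex.exp (-(γ * Complex.I))) * (1 - (starRingEnd ℂ) lam * (starRingEnd ℂ) z) +
          ((norm z)^2 : ℝ) * ((starRingEnd ℂ) z - lam) *
            ((starRingEnd ℂ) lam + z * (Complex.exp (-(γ * Complex.I)) - 2 * β * Real.cos γ) *
              Complex.exp (-(γ * Complex.I)))) /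
        (((1 - (norm z)^2) * (1 + (norm z)^2 - 2 * (lam * z).re) : ℝ)))
      ≤ 2 * (1 - (norm lam)^2) * (1 - β) * (norm z)^2 * Real.cos γ /
          ((1 - (norm z)^2) * (1 + (norm z)^2 - 2 * (lam * z).re)) := by
  intro z hz
  have hc : 0 < Real.cos γ := Real.cos_pos_of_mem_Ioo (abs_lt.1 hγ)
  have key := norm_sub_le_of_norm_sub_one_lt_norm_add (A := spiralConst γ β) hP hP0
    (fun ζ hζ ↦ norm_sub_one_lt_norm_add_spiralConst hβ1 hc (hre ζ hζ))
    (by rw [hP'0, one_add_spiralConst]; ring) hlam hz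
  rw [norm_one_add_spiralConst hβ1.le hc.le] at key
  rw [show 2 * (1 - ‖lam‖ ^ 2) * (1 - β) * ‖z‖ ^ 2 * Real.cos γ =
    2 * (1 - β) * Real.cos γ * (‖z‖ ^ 2 * (1 - ‖lam‖ ^ 2)) by ring]
  simpa only [spiralConst, diskDenom, mul_assoc] using key

theorem stmt_5 (γ β : ℝ) (hγ : |γ| < Real.pi / 2) (hβ0 : 0 ≤ β) (hβ1 : β < 1)
    (lam : ℂ) (hlam : norm lam < 1)
    (P : ℂ → ℂ) (hP : DifferentiableOn ℂ P (ball (0:ℂ) 1)) (hP0 : P 0 = 1)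
    (hre : ∀ z ∈ ball (0:ℂ) 1, β * Real.cos γ < (Complex.exp (γ * Complex.I) * P z).re)
    (hP'0 : deriv P 0 = 2 * (1 - β) * Complex.exp (-(γ * Complex.I)) * lam * Real.cos γ) :
    ∀ z ∈ ball (0:ℂ) 1,
      norm (P z -
        ((1 + lam * z * (Complex.exp (-(γ * Complex.I)) - 2 * β * Real.cos γ) *
            Complex.exp (-(γ * Complex.I))) * (1 - (starRingEnd ℂ) lam * (starRingEnd ℂ) z) +
          ((norm z)^2 : ℝ) * ((starRingEnd ℂ) z - lam) *
            ((starRingEnd ℂ) lam + z * (Complex.exp (-(γ * Complex.I)) - 2 * β * Real.cos γ) *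
              Complex.exp (-(γ * Complex.I)))) /
        (((1 - (norm z)^2) * (1 + (norm z)^2 - 2 * (lam * z).re) : ℝ)))
      ≤ 2 * (1 - (norm lam)^2) * (1 - β) * (norm z)^2 * Real.cos γ /
          ((1 - (norm z)^2) * (1 + (norm z)^2 - 2 * (lam * z).re)) :=
  stmt_5_general γ β hγ hβ1 lam hlam P hP hP0 hre hP'0
end

section
/- Let 0 ≤ β < 1 and let P be analytic on D with P(0)=1, P'(0)=0, and Re P(z) > β for all z ∈ D. Then for all z ∈ D: |P(z) - (1+(1-2β)|z|⁴)/(1-|z|⁴)| ≤ 2(1-β)|z|²/(1-|z|⁴). -/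
/-!
Consider the Cayley-type transform `ω = (P - 1) / (P + 1 - 2β)`. Since `Re P > β`, the point
`P z` is closer to `1` than to `2β - 1`, so `ω` maps the disc into itself; moreover
`ω 0 = ω' 0 = 0`, hence `|ω z| ≤ |z|²` by the Schwarz lemma of order two. Inverting,
`P = (1 + (1 - 2β) ω) / (1 - ω)`, and this Möbius map sends the disc `|w| ≤ ρ` onto the disc
with centre `(1 + (1 - 2β) ρ²) / (1 - ρ²)` and radius `2 (1 - β) ρ / (1 - ρ²)`; take `ρ = |z|²`.
-/

open Complex Metric Set
open scoped Topology

namespace Complex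

theorem norm_le_norm_sq_of_deriv_eq_zero {f : ℂ → ℂ} (hd : DifferentiableOn ℂ f (ball 0 1))
    (h0 : f 0 = 0) (h'0 : deriv f 0 = 0) (hf : ∀ z ∈ ball (0 : ℂ) 1, ‖f z‖ ≤ 1) {z : ℂ}
    (hz : z ∈ ball (0 : ℂ) 1) : ‖f z‖ ≤ ‖z‖ ^ 2 := by
  have hderiv : HasDerivAt f 0 0 := by
    simpa [h'0] using (hd.differentiableAt (ball_mem_nhds _ one_pos)).hasDerivAt
  have hlittleO : (f · - f 0) =o[𝓝 0] (fun w ↦ ‖w - 0‖ ^ 1) := by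
    simpa using (hasDerivAt_iff_isLittleO.mp hderiv).norm_right
  have hmaps : MapsTo f (ball 0 1) (closedBall (f 0) 1) := fun w hw ↦ by
    simpa [h0] using hf w hw
  simpa [h0] using dist_le_mul_div_pow_of_mapsTo_ball_of_isLittleO hd hmaps hlittleO hz

end Complex

section Mobius

variable {β : ℝ}

theorem norm_sub_one_lt_norm_add_one_sub {p : ℂ} (hβ : β < 1) (hp : β < p.re) :
    ‖p - 1‖ < ‖p + 1 - 2 * β‖ := by
  refine lt_of_pow_lt_pow_left₀ 2 (norm_nonneg _) ?_
  simp only [Complex.sq_norm, normSq_apply, sub_re, sub_im, add_re, add_im, mul_re, mul_im,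
    one_re, one_im, ofReal_re, ofReal_im, re_ofNat, im_ofNat]
  nlinarith [mul_pos (sub_pos.2 hβ) (sub_pos.2 hp)]

theorem mobius_apply_cayley_eq {p : ℂ} (hβ : β ≠ 1) (hp : p + 1 - 2 * β ≠ 0) :
    (1 + (1 - 2 * β) * ((p - 1) / (p + 1 - 2 * β))) / (1 - (p - 1) / (p + 1 - 2 * β)) = p := by
  have hβ' : (2 - 2 * β : ℂ) ≠ 0 := by
    rw [← ofReal_ofNat, ← ofReal_mul, ← ofReal_sub, ofReal_ne_zero]
    contrapose! hβ
    linarith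
  have hnum : 1 + (1 - 2 * β) * ((p - 1) / (p + 1 - 2 * β))
      = (2 - 2 * β) * p / (p + 1 - 2 * β) := by
    field_simp
    ring
  have hden : 1 - (p - 1) / (p + 1 - 2 * β) = (2 - 2 * β) / (p + 1 - 2 * β) := by
    field_simp
    ring
  rw [hnum, hden, div_div_div_cancel_right₀ hp, mul_div_cancel_left₀ _ hβ']

theorem norm_sub_sq_le_mul_norm_one_sub {w : ℂ} {ρ : ℝ} (hρ0 : 0 ≤ ρ) (hρ1 : ρ ≤ 1)
    (hw : ‖w‖ ≤ ρ) : ‖w - ρ ^ 2‖ ≤ ρ * ‖1 - w‖ := by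
  have hid : ‖w - ρ ^ 2‖ ^ 2 = (ρ * ‖1 - w‖) ^ 2 + (1 - ρ ^ 2) * (‖w‖ ^ 2 - ρ ^ 2) := by
    simp only [mul_pow, Complex.sq_norm, normSq_apply, sub_re, sub_im, ← ofReal_pow, one_re,
      one_im, ofReal_re, ofReal_im]
    ring
  refine le_of_pow_le_pow_left₀ two_ne_zero (by positivity) ?_
  rw [hid]
  nlinarith [pow_le_pow_left₀ (norm_nonneg w) hw 2, pow_le_one₀ hρ0 hρ1 (n := 2)]

theorem norm_mobius_sub_center_le {w : ℂ} {ρ : ℝ} (hβ : β ≤ 1) (hρ0 : 0 ≤ ρ) (hρ1 : ρ < 1)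
    (hw : ‖w‖ ≤ ρ) :
    ‖(1 + (1 - 2 * β) * w) / (1 - w) - (((1 + (1 - 2 * β) * ρ ^ 2) / (1 - ρ ^ 2) : ℝ))‖
      ≤ 2 * (1 - β) * ρ / (1 - ρ ^ 2) := by
  have hρ2 : 0 < 1 - ρ ^ 2 := by nlinarith
  have h1w : 0 < ‖1 - w‖ := by
    refine norm_pos_iff.2 (sub_ne_zero.2 fun h ↦ ?_)
    rw [← h, norm_one] at hw
    linarith
  have hid : (1 + (1 - 2 * β) * w) / (1 - w) - (((1 + (1 - 2 * β) * ρ ^ 2) / (1 - ρ ^ 2) : ℝ))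
      = ((2 * (1 - β) / (1 - ρ ^ 2) : ℝ) : ℂ) * (w - ρ ^ 2) / (1 - w) := by
    have : (1 - ρ ^ 2 : ℂ) ≠ 0 := by exact_mod_cast hρ2.ne'
    field_simp [norm_pos_iff.1 h1w]
    push_cast
    field_simp
    ring
  rw [hid, norm_div, norm_mul, norm_real, Real.norm_of_nonneg (by bound), div_le_iff₀ h1w]
  calc 2 * (1 - β) / (1 - ρ ^ 2) * ‖w - ρ ^ 2‖
      ≤ 2 * (1 - β) / (1 - ρ ^ 2) * (ρ * ‖1 - w‖) := by
        gcongr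
        exact norm_sub_sq_le_mul_norm_one_sub hρ0 hρ1.le hw
    _ = 2 * (1 - β) * ρ / (1 - ρ ^ 2) * ‖1 - w‖ := by ring

end Mobius

theorem stmt_6_general (β : ℝ) (hβ1 : β < 1)
    (P : ℂ → ℂ) (hP : DifferentiableOn ℂ P (ball (0:ℂ) 1)) (hP0 : P 0 = 1)
    (hP'0 : deriv P 0 = 0)
    (hre : ∀ z ∈ ball (0:ℂ) 1, β < (P z).re) :
    ∀ z ∈ ball (0:ℂ) 1,
      ‖P z - (((1 + (1 - 2*β) * ‖z‖^4) / (1 - ‖z‖^4) : ℝ))‖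
        ≤ 2 * (1 - β) * ‖z‖^2 / (1 - ‖z‖^4) := by
  intro z hz
  have hlt (w) (hw : w ∈ ball (0 : ℂ) 1) : ‖P w - 1‖ < ‖P w + 1 - 2 * β‖ :=
    norm_sub_one_lt_norm_add_one_sub hβ1 (hre w hw)
  have hne (w) (hw : w ∈ ball (0 : ℂ) 1) : P w + 1 - 2 * β ≠ 0 :=
    norm_pos_iff.1 ((norm_nonneg _).trans_lt (hlt w hw))
  set ω : ℂ → ℂ := fun w ↦ (P w - 1) / (P w + 1 - 2 * β)
  have hω_diff : DifferentiableOn ℂ ω (ball 0 1) :=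
    (hP.sub_const 1).div ((hP.add_const 1).sub_const _) hne
  have hω_deriv : deriv ω 0 = 0 := by
    have hP_deriv : HasDerivAt P 0 0 := by
      simpa [hP'0] using (hP.differentiableAt (ball_mem_nhds _ one_pos)).hasDerivAt
    have hne0 := hne 0 (mem_ball_self one_pos)
    refine ((hP_deriv.sub_const 1).div ((hP_deriv.add_const 1).sub_const _) hne0).deriv.trans ?_
    simp [hP0]
  have hω_le_one (w) (hw : w ∈ ball (0 : ℂ) 1) : ‖ω w‖ ≤ 1 := by
    rw [norm_div, div_le_one₀ ((norm_nonneg _).trans_lt (hlt w hw))]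
    exact (hlt w hw).le
  have hω_le : ‖ω z‖ ≤ ‖z‖ ^ 2 :=
    norm_le_norm_sq_of_deriv_eq_zero hω_diff (by simp [ω, hP0]) hω_deriv hω_le_one hz
  have hz1 : ‖z‖ ^ 2 < 1 := pow_lt_one₀ (norm_nonneg z) (mem_ball_zero_iff.1 hz) two_ne_zero
  rw [← mobius_apply_cayley_eq hβ1.ne (hne z hz)]
  simpa only [← pow_mul] using norm_mobius_sub_center_le hβ1.le (sq_nonneg _) hz1 hω_le

theorem stmt_6 (β : ℝ) (hβ0 : 0 ≤ β) (hβ1 : β < 1)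
    (P : ℂ → ℂ) (hP : DifferentiableOn ℂ P (ball (0:ℂ) 1)) (hP0 : P 0 = 1)
    (hP'0 : deriv P 0 = 0)
    (hre : ∀ z ∈ ball (0:ℂ) 1, β < (P z).re) :
    ∀ z ∈ ball (0:ℂ) 1,
      ‖P z - (((1 + (1 - 2*β) * ‖z‖^4) / (1 - ‖z‖^4) : ℝ))‖
        ≤ 2 * (1 - β) * ‖z‖^2 / (1 - ‖z‖^4) :=
  stmt_6_general β hβ1 P hP hP0 hP'0 hre
end

section
/- Let 0 ≤ β < 1/2 and let f be analytic on D with f(0)=0, f'(0)=1, f''(0)=0, and Re f'(z) > β for all z ∈ D. Then |f'(z)| ≤ (1+(1-2β)|z|²)/(1-|z|²) for all z ∈ D, and consequently sup_{z∈D} (1-|z|²)|f'(z)| ≤ 2(1-β). -/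
/-! With `c = 1 - 2β`, the Möbius map `w ↦ (w - 1) / (w + c)` sends the half-plane `Re w > β`
into the unit disk, so `φ = (f' - 1) / (f' + c)` is a self-map of the disk with `φ(0) = φ'(0) = 0`.
The second-order Schwarz lemma gives `|φ(z)| ≤ |z|²`, and inverting `f' = (1 + c φ) / (1 - φ)`
yields `|f'(z)| ≤ (1 + c|z|²) / (1 - |z|²)`. -/

open Complex Metric Set

namespace Complex

theorem norm_le_norm_sq_of_mapsTo_ball {φ : ℂ → ℂ} (hd : DifferentiableOn ℂ φ (ball 0 1))
    (h_maps : MapsTo φ (ball 0 1) (closedBall 0 1)) (h₀ : φ 0 = 0) (h'₀ : deriv φ 0 = 0)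
    {z : ℂ} (hz : z ∈ ball (0 : ℂ) 1) : ‖φ z‖ ≤ ‖z‖ ^ 2 := by
  have hφ' : HasDerivAt φ 0 0 := by
    simpa [h'₀] using
      (hd.differentiableAt (isOpen_ball.mem_nhds (mem_ball_self one_pos))).hasDerivAt
  have hlittle : (φ · - φ 0) =o[nhds 0] (fun w ↦ ‖w - 0‖ ^ 1) := by
    simpa using hφ'.isLittleO.norm_right
  simpa [h₀] using
    (dist_le_mul_div_pow_of_mapsTo_ball_of_isLittleO hd (by rwa [h₀]) hlittle hz).trans_eq
      (one_mul _)

/-- The line `Re w = β` is the perpendicular bisector of `1` and `-(1 - 2β)`. -/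
theorem norm_sub_one_lt_norm_add_of_lt_re {β : ℝ} (hβ : β < 1) {w : ℂ} (hw : β < w.re) :
    ‖w - 1‖ < ‖w + (1 - 2 * β : ℝ)‖ := by
  rw [← sq_lt_sq₀ (norm_nonneg _) (norm_nonneg _), Complex.sq_norm, Complex.sq_norm,
    normSq_apply, normSq_apply]
  simp only [sub_re, sub_im, add_re, add_im, one_re, one_im, ofReal_re, ofReal_im]
  nlinarith [mul_pos (sub_pos.mpr hw) (sub_pos.mpr hβ)]

theorem norm_le_of_mul_one_sub_eq {w u : ℂ} {c t : ℝ} (hc : 0 ≤ c) (hu : ‖u‖ ≤ t)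
    (ht : t < 1) (h : w * (1 - u) = 1 + c * u) : ‖w‖ ≤ (1 + c * t) / (1 - t) := by
  rw [le_div_iff₀ (sub_pos.mpr ht)]
  calc ‖w‖ * (1 - t) ≤ ‖w‖ * ‖1 - u‖ := by
        gcongr
        have := norm_sub_norm_le (1 : ℂ) u
        rw [norm_one] at this
        linarith
    _ = ‖1 + c * u‖ := by rw [← norm_mul, h]
    _ ≤ 1 + c * ‖u‖ := by
        simpa [abs_of_nonneg hc] using norm_add_le (1 : ℂ) (c * u)
    _ ≤ 1 + c * t := by gcongr

theorem norm_le_of_forall_lt_re {g : ℂ → ℂ} {β : ℝ} (hβ : β ≤ 1 / 2)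
    (hg : DifferentiableOn ℂ g (ball 0 1)) (hg₀ : g 0 = 1) (hg'₀ : deriv g 0 = 0)
    (hre : ∀ z ∈ ball (0 : ℂ) 1, β < (g z).re) {z : ℂ} (hz : z ∈ ball (0 : ℂ) 1) :
    ‖g z‖ ≤ (1 + (1 - 2 * β) * ‖z‖ ^ 2) / (1 - ‖z‖ ^ 2) := by
  set c : ℂ := ((1 - 2 * β : ℝ) : ℂ)
  have hlt : ∀ w ∈ ball (0 : ℂ) 1, ‖g w - 1‖ < ‖g w + c‖ := fun w hw ↦
    norm_sub_one_lt_norm_add_of_lt_re (by linarith) (hre w hw)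
  have hden : ∀ w ∈ ball (0 : ℂ) 1, g w + c ≠ 0 := fun w hw ↦
    norm_pos_iff.mp <| (norm_nonneg _).trans_lt (hlt w hw)
  set φ : ℂ → ℂ := fun w ↦ (g w - 1) / (g w + c)
  have hφd : DifferentiableOn ℂ φ (ball 0 1) := (hg.sub_const 1).div (hg.add_const c) hden
  have hφ_maps : MapsTo φ (ball 0 1) (closedBall 0 1) := fun w hw ↦ by
    rw [mem_closedBall_zero_iff, norm_div]
    exact div_le_one_of_le₀ (hlt w hw).le (norm_nonneg _)
  have h₀ : (0 : ℂ) ∈ ball (0 : ℂ) 1 := mem_ball_self one_pos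
  have hφ'₀ : deriv φ 0 = 0 := by
    have hg' : HasDerivAt g 0 0 := by
      simpa [hg'₀] using (hg.differentiableAt (isOpen_ball.mem_nhds h₀)).hasDerivAt
    have hφ' : HasDerivAt φ _ 0 := (hg'.sub_const 1).div (hg'.add_const c) (hden 0 h₀)
    simpa using hφ'.deriv
  have hφz : ‖φ z‖ ≤ ‖z‖ ^ 2 :=
    norm_le_norm_sq_of_mapsTo_ball hφd hφ_maps (by simp [φ, hg₀]) hφ'₀ hz
  have hz1 : ‖z‖ ^ 2 < 1 := pow_lt_one₀ (norm_nonneg z) (mem_ball_zero_iff.mp hz) two_ne_zero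
  refine norm_le_of_mul_one_sub_eq (by linarith) hφz hz1 ?_
  have := hden z hz
  simp only [φ]
  field_simp
  ring

end Complex

theorem stmt_7_general (β : ℝ) (hβ1 : β < 1/2)
    (f : ℂ → ℂ) (hf : DifferentiableOn ℂ f (ball (0:ℂ) 1))
    (hf'0 : deriv f 0 = 1) (hf''0 : iteratedDeriv 2 f 0 = 0)
    (hre : ∀ z ∈ ball (0:ℂ) 1, β < (deriv f z).re) :
    (∀ z ∈ ball (0:ℂ) 1,
      ‖deriv f z‖ ≤ (1 + (1 - 2*β) * ‖z‖^2) / (1 - ‖z‖^2)) ∧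
    (∀ z ∈ ball (0:ℂ) 1,
      (1 - ‖z‖^2) * ‖deriv f z‖ ≤ 2 * (1 - β)) := by
  have hf' : DifferentiableOn ℂ (deriv f) (ball 0 1) :=
    ((hf.analyticOnNhd isOpen_ball).deriv).differentiableOn
  have hf''0' : deriv (deriv f) 0 = 0 := by
    rwa [iteratedDeriv_succ, iteratedDeriv_one] at hf''0
  have hbound :
      ∀ z ∈ ball (0 : ℂ) 1, ‖deriv f z‖ ≤ (1 + (1 - 2 * β) * ‖z‖ ^ 2) / (1 - ‖z‖ ^ 2) :=
    fun z ↦ norm_le_of_forall_lt_re hβ1.le hf' hf'0 hf''0' hre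
  refine ⟨hbound, fun z hz ↦ ?_⟩
  have hz1 : ‖z‖ ^ 2 < 1 := pow_lt_one₀ (norm_nonneg z) (mem_ball_zero_iff.mp hz) two_ne_zero
  calc (1 - ‖z‖ ^ 2) * ‖deriv f z‖
      ≤ (1 - ‖z‖ ^ 2) * ((1 + (1 - 2 * β) * ‖z‖ ^ 2) / (1 - ‖z‖ ^ 2)) :=
        mul_le_mul_of_nonneg_left (hbound z hz) (by linarith)
    _ = 1 + (1 - 2 * β) * ‖z‖ ^ 2 := mul_div_cancel₀ _ (by linarith)
    _ ≤ 2 * (1 - β) := by nlinarith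

theorem stmt_7 (β : ℝ) (hβ0 : 0 ≤ β) (hβ1 : β < 1/2)
    (f : ℂ → ℂ) (hf : DifferentiableOn ℂ f (ball (0:ℂ) 1)) (hf0 : f 0 = 0)
    (hf'0 : deriv f 0 = 1) (hf''0 : iteratedDeriv 2 f 0 = 0)
    (hre : ∀ z ∈ ball (0:ℂ) 1, β < (deriv f z).re) :
    (∀ z ∈ ball (0:ℂ) 1,
      ‖deriv f z‖ ≤ (1 + (1 - 2*β) * ‖z‖^2) / (1 - ‖z‖^2)) ∧
    (∀ z ∈ ball (0:ℂ) 1,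
      (1 - ‖z‖^2) * ‖deriv f z‖ ≤ 2 * (1 - β)) :=
  stmt_7_general β hβ1 f hf hf'0 hf''0 hre
end

section
/- Fix γ real with |γ| < π/2, 0 ≤ β < 1, λ with |λ| = 1, and z₀ ∈ D. If P is analytic on D with P(0)=1, Re(e^{iγ}P(z)) > β cos γ in D, and P'(0) = 2(1-β)e^{-iγ}λ cos γ, then ∫_0^{z₀} P(ζ)dζ = z₀ - 2(1-β)e^{-iγ}(cos γ)(z₀ + (1/λ)log(1-λz₀)), where log is the principal branch. -/
open Complex Metric Set

/-!
Put `d = (1 - β) cos γ > 0`. Then `Q = 1 + e^{iγ} (P - 1) / d` has positive real part on the disc,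
`Q 0 = 1` and `Q' 0 = 2λ` with `‖λ‖ = 1`. The Cayley transform `(Q - 1) / (Q + 1)` maps the disc
into itself, fixes `0` and has derivative of modulus one there, so by the equality case of Schwarz's
lemma it is `z ↦ λ z`. Hence `P z = 1 + K λ z / (1 - λ z)` with `K = 2 (1 - β) e^{-iγ} cos γ`, whose
primitive `z - K (z + λ⁻¹ log (1 - λ z))` is holomorphic on the disc because `1 - λ z` stays in the
slit plane.
-/

namespace Complex

lemma add_one_ne_zero_of_re_pos {w : ℂ} (hw : 0 < w.re) : w + 1 ≠ 0 := by
  intro h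
  have := congrArg re h
  simp only [add_re, one_re, zero_re] at this
  linarith

lemma norm_sub_one_div_add_one_lt_one {w : ℂ} (hw : 0 < w.re) : ‖(w - 1) / (w + 1)‖ < 1 := by
  rw [norm_div, div_lt_one (norm_pos_iff.mpr (add_one_ne_zero_of_re_pos hw)),
    ← sq_lt_sq₀ (norm_nonneg _) (norm_nonneg _), ← normSq_eq_norm_sq, ← normSq_eq_norm_sq]
  simp only [normSq_apply, sub_re, sub_im, add_re, add_im, one_re, one_im]
  nlinarith

lemma one_sub_mul_mem_slitPlane {a z : ℂ} (ha : ‖a‖ = 1) (hz : z ∈ ball (0 : ℂ) 1) :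
    1 - a * z ∈ slitPlane := by
  rw [sub_eq_add_neg]
  apply mem_slitPlane_of_norm_lt_one
  rwa [norm_neg, norm_mul, ha, one_mul, ← mem_ball_zero_iff]

lemma eqOn_mul_of_mapsTo_unitBall_of_hasDerivAt {f : ℂ → ℂ} {a : ℂ}
    (hf : DifferentiableOn ℂ f (ball 0 1)) (h_maps : MapsTo f (ball 0 1) (closedBall 0 1))
    (hf0 : f 0 = 0) (hf' : HasDerivAt f a 0) (ha : ‖a‖ = 1) :
    EqOn f (fun z => a * z) (ball 0 1) := by
  have h_slope : ‖dslope f 0 0‖ = 1 / 1 := by rw [dslope_same, hf'.deriv, ha, div_one]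
  intro z hz
  simpa [hf0, hf'.deriv, mul_comm] using
    affine_of_mapsTo_ball_of_norm_dslope_eq_div (c := 0) hf (by rwa [hf0]) (mem_ball_self one_pos)
      h_slope hz

theorem eqOn_one_add_div_one_sub_of_re_pos {Q : ℂ → ℂ} {a : ℂ}
    (hQ : DifferentiableOn ℂ Q (ball 0 1)) (hre : ∀ z ∈ ball (0 : ℂ) 1, 0 < (Q z).re)
    (hQ0 : Q 0 = 1) (hQ' : HasDerivAt Q (2 * a) 0) (ha : ‖a‖ = 1) :
    EqOn Q (fun z => (1 + a * z) / (1 - a * z)) (ball 0 1) := by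
  have hden : ∀ z ∈ ball (0 : ℂ) 1, Q z + 1 ≠ 0 := fun z hz => add_one_ne_zero_of_re_pos (hre z hz)
  set ω : ℂ → ℂ := fun z => (Q z - 1) / (Q z + 1)
  have hω : EqOn ω (fun z => a * z) (ball 0 1) := by
    refine eqOn_mul_of_mapsTo_unitBall_of_hasDerivAt ((hQ.sub_const 1).div (hQ.add_const 1) hden)
      (fun z hz => ?_) (by simp [ω, hQ0]) ?_ ha
    · exact mem_closedBall_zero_iff.mpr (norm_sub_one_div_add_one_lt_one (hre z hz)).le
    · refine ((hQ'.sub_const 1).div (hQ'.add_const 1) (hden 0 (mem_ball_self one_pos)))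
        |>.congr_deriv ?_
      rw [hQ0]
      ring
  intro z hz
  have hωz := hω hz
  simp only [ω, div_eq_iff (hden z hz)] at hωz
  rw [eq_div_iff (slitPlane_ne_zero (one_sub_mul_mem_slitPlane ha hz))]
  linear_combination hωz

lemma hasDerivAt_sub_mul_add_div_mul_log_one_sub {a c z : ℂ} (hc : c ≠ 0)
    (hz : 1 - c * z ∈ slitPlane) :
    HasDerivAt (fun ζ => ζ - a * (ζ + 1 / c * log (1 - c * ζ)))
      (1 + a * (c * z) / (1 - c * z)) z := by
  have hlog : HasDerivAt (fun ζ => log (1 - c * ζ)) (-c / (1 - c * z)) z :=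
    ((((hasDerivAt_id z).const_mul c).const_sub 1).clog hz).congr_deriv (by simp)
  refine ((hasDerivAt_id z).sub (((hasDerivAt_id z).add (hlog.const_mul (1 / c))).const_mul a))
    |>.congr_deriv ?_
  field_simp [slitPlane_ne_zero hz]
  ring

end Complex

theorem eqOn_of_re_exp_mul_gt_of_deriv_eq {γ β : ℝ} {lam : ℂ} {P : ℂ → ℂ}
    (hγ : |γ| < Real.pi / 2) (hβ1 : β < 1) (hlam : ‖lam‖ = 1)
    (hP : DifferentiableOn ℂ P (ball (0:ℂ) 1)) (hP0 : P 0 = 1)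
    (hre : ∀ z ∈ ball (0:ℂ) 1, β * Real.cos γ < (exp (γ * I) * P z).re)
    (hP'0 : deriv P 0 = 2 * (1 - β) * exp (-(γ * I)) * lam * Real.cos γ) :
    EqOn P (fun z => 1 + 2 * (1 - β) * exp (-(γ * I)) * Real.cos γ * (lam * z) / (1 - lam * z))
      (ball 0 1) := by
  have hcos : 0 < Real.cos γ := Real.cos_pos_of_mem_Ioo (abs_lt.mp (by simpa using hγ))
  have hexp : exp (γ * I) * exp (-(γ * I)) = 1 := by rw [← exp_add, add_neg_cancel, exp_zero]
  have hexp_re : (exp (γ * I)).re = Real.cos γ := exp_ofReal_mul_I_re γ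
  set c := Real.cos γ
  set d : ℝ := (1 - β) * c with hd_def
  have hd : 0 < d := mul_pos (by linarith) hcos
  have hdC : (d : ℂ) ≠ 0 := ofReal_ne_zero.mpr hd.ne'
  set Q : ℂ → ℂ := fun z => 1 + exp (γ * I) * (P z - 1) / d
  have hQ_re : ∀ z ∈ ball (0:ℂ) 1, 0 < (Q z).re := by
    intro z hz
    have h : -1 < ((exp (γ * I) * P z).re - c) / d := by
      rw [lt_div_iff₀ hd]
      linarith [hre z hz]
    simp only [Q, add_re, one_re, div_ofReal_re, mul_sub, mul_one, sub_re, hexp_re]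
    linarith
  have hP' : HasDerivAt P (deriv P 0) 0 :=
    (hP.differentiableAt (isOpen_ball.mem_nhds (mem_ball_self one_pos))).hasDerivAt
  have hQ' : HasDerivAt Q (2 * lam) 0 := by
    refine (((hP'.sub_const 1).const_mul (exp (γ * I))).div_const (d : ℂ)).const_add 1
      |>.congr_deriv ?_
    rw [hP'0, eq_comm, eq_div_iff hdC, hd_def]
    push_cast
    linear_combination (-2 * lam * (1 - β) * c) * hexp
  have hQ_eq := eqOn_one_add_div_one_sub_of_re_pos
    (((hP.sub_const 1).const_mul _).div_const _ |>.const_add 1) hQ_re (by simp [hP0]) hQ' hlam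
  intro z hz
  have h1 := slitPlane_ne_zero (one_sub_mul_mem_slitPlane hlam hz)
  have key : exp (γ * I) * (P z - 1) * (1 - lam * z) = 2 * ((1 - β) * c) * (lam * z) := by
    have hz' := hQ_eq hz
    field_simp at hz'
    rw [hd_def] at hz'
    push_cast at hz'
    linear_combination hz'
  field_simp
  linear_combination exp (-(γ * I)) * key - (P z - 1) * (1 - lam * z) * hexp

theorem stmt_16_general (γ β : ℝ) (hγ : |γ| < Real.pi / 2) (hβ1 : β < 1)
    (lam : ℂ) (hlam : ‖lam‖ = 1) (z₀ : ℂ) (hz₀ : z₀ ∈ ball (0:ℂ) 1)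
    (P : ℂ → ℂ) (hP : DifferentiableOn ℂ P (ball (0:ℂ) 1)) (hP0 : P 0 = 1)
    (hre : ∀ z ∈ ball (0:ℂ) 1, β * Real.cos γ < (Complex.exp (γ * Complex.I) * P z).re)
    (hP'0 : deriv P 0 = 2 * (1 - β) * Complex.exp (-(γ * Complex.I)) * lam * Real.cos γ) :
    ∫ t in (0:ℝ)..1, z₀ * P ((t : ℂ) * z₀) =
      z₀ - 2 * (1 - β) * Complex.exp (-(γ * Complex.I)) * Real.cos γ *
        (z₀ + (1 / lam) * Complex.log (1 - lam * z₀)) := by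
  have hP_eq := eqOn_of_re_exp_mul_gt_of_deriv_eq hγ hβ1 hlam hP hP0 hre hP'0
  have hlam0 : lam ≠ 0 := norm_ne_zero_iff.mp (by simp [hlam])
  have hseg : ∀ t ∈ Icc (0:ℝ) 1, (0:ℂ) + t • z₀ ∈ ball (0:ℂ) 1 := fun t ht => by
    rw [zero_add]
    exact (convex_ball (0:ℂ) 1).smul_mem_of_zero_mem (mem_ball_self one_pos) hz₀ ht
  have hFTC := intervalIntegral.integral_unitInterval_deriv_eq_sub
    (hP.continuousOn.comp (by fun_prop) hseg) fun t ht => by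
      rw [hP_eq (hseg t ht)]
      exact hasDerivAt_sub_mul_add_div_mul_log_one_sub hlam0
        (one_sub_mul_mem_slitPlane hlam (hseg t ht))
  simpa [real_smul] using hFTC

theorem stmt_16 (γ β : ℝ) (hγ : |γ| < Real.pi / 2) (hβ0 : 0 ≤ β) (hβ1 : β < 1)
    (lam : ℂ) (hlam : ‖lam‖ = 1) (z₀ : ℂ) (hz₀ : z₀ ∈ ball (0:ℂ) 1)
    (P : ℂ → ℂ) (hP : DifferentiableOn ℂ P (ball (0:ℂ) 1)) (hP0 : P 0 = 1)
    (hre : ∀ z ∈ ball (0:ℂ) 1, β * Real.cos γ < (Complex.exp (γ * Complex.I) * P z).re)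
    (hP'0 : deriv P 0 = 2 * (1 - β) * Complex.exp (-(γ * Complex.I)) * lam * Real.cos γ) :
    ∫ t in (0:ℝ)..1, z₀ * P ((t : ℂ) * z₀) =
      z₀ - 2 * (1 - β) * Complex.exp (-(γ * Complex.I)) * Real.cos γ *
        (z₀ + (1 / lam) * Complex.log (1 - lam * z₀)) :=
  stmt_16_general γ β hγ hβ1 lam hlam z₀ hz₀ P hP hP0 hre hP'0
end

section
/- Let 0 ≤ β < 1 and a ∈ closure(D). For λ = 0 and α ≠ 1 with Re α > 0, the function F_{a,0}(z) = z + ((1-β)a z³/(1-α)) ∫_0^1 (t^{1/2} - t^{1/(2α)})/(1-t a z²) dt satisfies F'_{a,0}(z) + α z F''_{a,0}(z) = (1 + (1-2β)az²)/(1 - az²) for all z ∈ D. -/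
open Complex Metric Set intervalIntegral MeasureTheory

noncomputable section Aux18




private def g18 (α : ℂ) (t : ℝ) : ℂ := (t:ℂ) ^ ((1:ℂ)/2) - (t:ℂ) ^ (1/(2*α))

private lemma s18_re {α : ℂ} (hα : 0 < α.re) : 0 < (1/(2*α)).re := by
  have hα0 : α ≠ 0 := fun h => by simp [h] at hα
  rw [one_div, Complex.inv_re]
  apply div_pos (by simpa [Complex.mul_re] using hα)
  exact Complex.normSq_pos.mpr (by simpa using hα0)

private lemma g18_cont {α : ℂ} (hα : 0 < α.re) : Continuous (g18 α) :=
  (continuous_ofReal_cpow_const (by norm_num)).sub (continuous_ofReal_cpow_const (s18_re hα))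

private lemma g18_bound {α : ℂ} (hα : 0 < α.re) {t : ℝ} (ht0 : 0 < t) (ht1 : t ≤ 1) :
    ‖g18 α t‖ ≤ 2 := by
  have h1 : ∀ c : ℂ, 0 ≤ c.re → ‖(t:ℂ)^c‖ ≤ 1 := fun c hc => by
    rw [Complex.norm_cpow_eq_rpow_re_of_pos ht0]
    exact Real.rpow_le_one ht0.le ht1 hc
  calc ‖g18 α t‖ ≤ ‖(t:ℂ)^((1:ℂ)/2)‖ + ‖(t:ℂ)^(1/(2*α))‖ := norm_sub_le _ _
  _ ≤ 1 + 1 := add_le_add (h1 _ (by norm_num)) (h1 _ (s18_re hα).le)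
  _ = 2 := by norm_num

private lemma den18_abs {a x : ℂ} (ha : ‖a‖ ≤ 1) {r : ℝ} (hx : ‖x‖ < r)
    {t : ℝ} (ht0 : 0 ≤ t) (ht1 : t ≤ 1) : ‖(t:ℂ)*a*x^2‖ < r^2 := by
  have h0 : 0 ≤ ‖x‖ := norm_nonneg x
  have ha' : ‖a‖ ≤ 1 := ha
  calc ‖(t:ℂ)*a*x^2‖ = t * ‖a‖ * ‖x‖^2 := by
        rw [norm_mul, norm_mul, norm_pow, Complex.norm_real, Real.norm_eq_abs,
          _root_.abs_of_nonneg ht0]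
  _ ≤ 1 * 1 * ‖x‖^2 := by gcongr
  _ = ‖x‖^2 := by ring
  _ < r^2 := by nlinarith

private lemma den18_lb {a x : ℂ} (ha : ‖a‖ ≤ 1) {r : ℝ} (hx : ‖x‖ < r)
    {t : ℝ} (ht0 : 0 ≤ t) (ht1 : t ≤ 1) : 1 - r^2 < ‖1 - (t:ℂ)*a*x^2‖ := by
  have h := den18_abs ha hx ht0 ht1
  have h2 : ‖(1:ℂ)‖ - ‖(t:ℂ)*a*x^2‖ ≤ ‖1 - (t:ℂ)*a*x^2‖ := norm_sub_norm_le _ _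
  simp only [norm_one] at h2; linarith

private lemma den18_ne {a x : ℂ} (ha : ‖a‖ ≤ 1) (hx : ‖x‖ < 1)
    {t : ℝ} (ht0 : 0 ≤ t) (ht1 : t ≤ 1) : 1 - (t:ℂ)*a*x^2 ≠ 0 := by
  have h := den18_lb ha (r := 1) hx ht0 ht1
  intro hc; rw [hc] at h; norm_num at h




private lemma hasDerivAt_u0 {a : ℂ} (t : ℝ) (x : ℂ) (h : 1 - (t:ℂ)*a*x^2 ≠ 0) :
    HasDerivAt (fun x : ℂ => x^3/(1 - (t:ℂ)*a*x^2))
      (x^2*(3 - (t:ℂ)*a*x^2)/(1-(t:ℂ)*a*x^2)^2) x := by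
  have h1 : HasDerivAt (fun x:ℂ => x^3) (3*x^2) x := by
    simpa using hasDerivAt_pow 3 x
  have h2 : HasDerivAt (fun x:ℂ => 1 - (t:ℂ)*a*x^2) (-((t:ℂ)*a*(2*x))) x := by
    have := ((hasDerivAt_pow 2 x).const_mul ((t:ℂ)*a)).const_sub 1
    simpa [mul_comm, mul_assoc] using this
  have := h1.fun_div h2 h
  refine this.congr_deriv ?_
  field_simp
  ring

private lemma hasDerivAt_u1 {a : ℂ} (t : ℝ) (x : ℂ) (h : 1 - (t:ℂ)*a*x^2 ≠ 0) :
    HasDerivAt (fun x : ℂ => x^2*(3 - (t:ℂ)*a*x^2)/(1-(t:ℂ)*a*x^2)^2)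
      (2*x*(3 + (t:ℂ)*a*x^2)/(1-(t:ℂ)*a*x^2)^3) x := by
  have h2 : HasDerivAt (fun x:ℂ => 1 - (t:ℂ)*a*x^2) (-((t:ℂ)*a*(2*x))) x := by
    have := ((hasDerivAt_pow 2 x).const_mul ((t:ℂ)*a)).const_sub 1
    simpa [mul_comm, mul_assoc] using this
  have hnum : HasDerivAt (fun x:ℂ => x^2*(3 - (t:ℂ)*a*x^2))
      (2*x*(3 - (t:ℂ)*a*x^2) + x^2*(-((t:ℂ)*a*(2*x)))) x := by
    have h3 : HasDerivAt (fun x:ℂ => 3 - (t:ℂ)*a*x^2) (-((t:ℂ)*a*(2*x))) x := by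
      have := ((hasDerivAt_pow 2 x).const_mul ((t:ℂ)*a)).const_sub 3
      simpa [mul_comm, mul_assoc] using this
    have := ((hasDerivAt_pow 2 x).fun_mul h3)
    simpa [mul_comm, mul_assoc] using this
  have hden : HasDerivAt (fun x:ℂ => (1-(t:ℂ)*a*x^2)^2)
      ((2:ℕ)*(1-(t:ℂ)*a*x^2)^1*(-((t:ℂ)*a*(2*x)))) x := h2.pow 2
  have := hnum.fun_div hden (pow_ne_zero 2 h)
  refine this.congr_deriv ?_
  field_simp
  ring
private def J1 (α a x : ℂ) : ℂ :=
  ∫ t in (0:ℝ)..1, g18 α t * (x^2*(3 - (t:ℂ)*a*x^2)/(1-(t:ℂ)*a*x^2)^2)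
private def J2 (α a x : ℂ) : ℂ :=
  ∫ t in (0:ℝ)..1, g18 α t * (2*x*(3 + (t:ℂ)*a*x^2)/(1-(t:ℂ)*a*x^2)^3)


/-- continuity in t of the integrands for fixed x in the unit ball -/
private lemma cont18 {α a x : ℂ} (hα : 0 < α.re) (ha : ‖a‖ ≤ 1) (hx : ‖x‖ < 1)
    (v : ℝ → ℂ) (hv : Continuous v) (n : ℕ) :
    ContinuousOn (fun t : ℝ => g18 α t * (v t/(1-(t:ℂ)*a*x^2)^n)) (Icc 0 1) := by
  have hden : Continuous (fun t : ℝ => 1 - (t:ℂ)*a*x^2) := by continuity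
  apply ((g18_cont hα).continuousOn).mul
  apply ContinuousOn.div (hv.continuousOn) ((hden.pow n).continuousOn)
  intro t ht
  exact pow_ne_zero n (den18_ne ha hx ht.1 ht.2)

private lemma aesm18 {α a x : ℂ} (hα : 0 < α.re) (ha : ‖a‖ ≤ 1) (hx : ‖x‖ < 1)
    (v : ℝ → ℂ) (hv : Continuous v) (n : ℕ) :
    AEStronglyMeasurable (fun t : ℝ => g18 α t * (v t/(1-(t:ℂ)*a*x^2)^n))
      (MeasureTheory.volume.restrict (Set.uIoc (0:ℝ) 1)) := by
  apply ((cont18 hα ha hx v hv n).mono _).aestronglyMeasurable measurableSet_uIoc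
  rw [uIoc_of_le (by norm_num : (0:ℝ) ≤ 1)]
  exact Ioc_subset_Icc_self

private lemma intInt18 {α a x : ℂ} (hα : 0 < α.re) (ha : ‖a‖ ≤ 1) (hx : ‖x‖ < 1)
    (v : ℝ → ℂ) (hv : Continuous v) (n : ℕ) :
    IntervalIntegrable (fun t : ℝ => g18 α t * (v t/(1-(t:ℂ)*a*x^2)^n))
      MeasureTheory.volume 0 1 := by
  apply ContinuousOn.intervalIntegrable
  rw [uIcc_of_le (by norm_num : (0:ℝ) ≤ 1)]
  exact cont18 hα ha hx v hv n

private lemma derivA {α a : ℂ} (hα : 0 < α.re) (ha : ‖a‖ ≤ 1) {z₀ : ℂ}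
    (hz : ‖z₀‖ < 1) :
    IntervalIntegrable
      (fun t => g18 α t * (z₀^2*(3 - (t:ℂ)*a*z₀^2)/(1-(t:ℂ)*a*z₀^2)^2)) volume 0 1 ∧
    HasDerivAt (fun x => ∫ t in (0:ℝ)..1, g18 α t * (x^3/(1 - (t:ℂ)*a*x^2))) (J1 α a z₀) z₀ := by
  set r : ℝ := (1+‖z₀‖)/2 with hr
  have hr1 : r < 1 := by simp only [hr]; linarith
  have hr0 : ‖z₀‖ < r := by simp only [hr]; linarith [norm_nonneg z₀]
  have hrpos : (0:ℝ) < 1 - r^2 := by nlinarith [norm_nonneg z₀]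
  set ε : ℝ := (1-‖z₀‖)/2 with hε
  have hεpos : 0 < ε := by simp only [hε]; linarith
  have hball : ∀ x ∈ ball z₀ ε, ‖x‖ < r := by
    intro x hx
    have h' : ‖x - z₀‖ < ε := by simpa [dist_eq_norm] using hx
    calc ‖x‖ = ‖z₀ + (x - z₀)‖ := by ring_nf
    _ ≤ ‖z₀‖ + ‖x - z₀‖ := norm_add_le _ _
    _ < ‖z₀‖ + ε := by linarith
    _ = r := by simp only [hε, hr]; ring
  have key := intervalIntegral.hasDerivAt_integral_of_dominated_loc_of_deriv_le
    (F := fun x t => g18 α t * (x^3/(1 - (t:ℂ)*a*x^2)))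
    (F' := fun x t => g18 α t * (x^2*(3 - (t:ℂ)*a*x^2)/(1-(t:ℂ)*a*x^2)^2))
    (x₀ := z₀) (a := 0) (b := 1) (μ := volume)
    (bound := fun _ => 2 * (4 * ((1-r^2)⁻¹)^2)) (ball_mem_nhds z₀ hεpos) ?_ ?_ ?_ ?_ ?_ ?_
  · exact ⟨key.1, key.2⟩
  · filter_upwards [ball_mem_nhds z₀ hεpos] with x hx
    have hx1 : ‖x‖ < 1 := lt_trans (hball x hx) hr1
    simpa using aesm18 hα ha hx1 (fun _ => x^3) continuous_const 1
  · have := intInt18 hα ha hz (fun _ => z₀^3) continuous_const 1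
    simpa using this
  · exact aesm18 hα ha hz (fun t => z₀^2*(3 - (t:ℂ)*a*z₀^2)) (by continuity) 2
  · apply MeasureTheory.ae_of_all
    intro t ht x hx
    rw [uIoc_of_le (by norm_num : (0:ℝ) ≤ 1)] at ht
    have hxr : ‖x‖ < r := hball x hx
    have hlb : 1 - r^2 < ‖1 - (t:ℂ)*a*x^2‖ := den18_lb ha hxr ht.1.le ht.2
    rw [norm_mul]
    apply mul_le_mul (g18_bound hα ht.1 ht.2) _ (norm_nonneg _) (by norm_num)
    rw [norm_div, norm_mul, norm_pow, norm_pow]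
    have h1 : ‖x‖^2 ≤ 1 := by nlinarith [norm_nonneg x, lt_trans hxr hr1]
    have h2 : ‖3 - (t:ℂ)*a*x^2‖ ≤ 4 := by
      calc ‖(3:ℂ) - (t:ℂ)*a*x^2‖ ≤ ‖(3:ℂ)‖ + ‖(t:ℂ)*a*x^2‖ := norm_sub_le _ _
      _ ≤ 3 + 1 := by
          have hw := den18_abs ha (r := 1) (lt_trans hxr hr1) ht.1.le ht.2
          norm_num at hw ⊢
          linarith
      _ = 4 := by norm_num
    calc ‖x‖^2*‖3 - (t:ℂ)*a*x^2‖/‖1 - (t:ℂ)*a*x^2‖^2 ≤ 1*4/(1-r^2)^2 := by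
          apply div_le_div₀ (by norm_num) (by nlinarith [norm_nonneg (3 - (t:ℂ)*a*x^2)])
            (by positivity) (pow_le_pow_left₀ hrpos.le hlb.le 2)
    _ = 4*((1-r^2)⁻¹)^2 := by field_simp
  · exact intervalIntegrable_const
  · apply MeasureTheory.ae_of_all
    intro t ht x hx
    rw [uIoc_of_le (by norm_num : (0:ℝ) ≤ 1)] at ht
    have hx1 : ‖x‖ < 1 := lt_trans (hball x hx) hr1
    exact (hasDerivAt_u0 t x (den18_ne ha hx1 ht.1.le ht.2)).const_mul (g18 α t)

private lemma derivB {α a : ℂ} (hα : 0 < α.re) (ha : ‖a‖ ≤ 1) {z₀ : ℂ}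
    (hz : ‖z₀‖ < 1) :
    IntervalIntegrable
      (fun t => g18 α t * (2*z₀*(3 + (t:ℂ)*a*z₀^2)/(1-(t:ℂ)*a*z₀^2)^3)) volume 0 1 ∧
    HasDerivAt (fun x => J1 α a x) (J2 α a z₀) z₀ := by
  set r : ℝ := (1+‖z₀‖)/2 with hr
  have hr1 : r < 1 := by simp only [hr]; linarith
  have hr0 : ‖z₀‖ < r := by simp only [hr]; linarith [norm_nonneg z₀]
  have hrpos : (0:ℝ) < 1 - r^2 := by nlinarith [norm_nonneg z₀]
  set ε : ℝ := (1-‖z₀‖)/2 with hε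
  have hεpos : 0 < ε := by simp only [hε]; linarith
  have hball : ∀ x ∈ ball z₀ ε, ‖x‖ < r := by
    intro x hx
    have h' : ‖x - z₀‖ < ε := by simpa [dist_eq_norm] using hx
    calc ‖x‖ = ‖z₀ + (x - z₀)‖ := by ring_nf
    _ ≤ ‖z₀‖ + ‖x - z₀‖ := norm_add_le _ _
    _ < ‖z₀‖ + ε := by linarith
    _ = r := by simp only [hε, hr]; ring
  have key := intervalIntegral.hasDerivAt_integral_of_dominated_loc_of_deriv_le
    (F := fun x t => g18 α t * (x^2*(3 - (t:ℂ)*a*x^2)/(1-(t:ℂ)*a*x^2)^2))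
    (F' := fun x t => g18 α t * (2*x*(3 + (t:ℂ)*a*x^2)/(1-(t:ℂ)*a*x^2)^3))
    (x₀ := z₀) (a := 0) (b := 1) (μ := volume)
    (bound := fun _ => 2 * (8 * ((1-r^2)⁻¹)^3)) (ball_mem_nhds z₀ hεpos) ?_ ?_ ?_ ?_ ?_ ?_
  · refine ⟨key.1, ?_⟩
    have h2 := key.2
    simp only [J1, J2]
    exact h2
  · filter_upwards [ball_mem_nhds z₀ hεpos] with x hx
    have hx1 : ‖x‖ < 1 := lt_trans (hball x hx) hr1
    exact aesm18 hα ha hx1 (fun t => x^2*(3 - (t:ℂ)*a*x^2)) (by continuity) 2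
  · exact intInt18 hα ha hz (fun t => z₀^2*(3 - (t:ℂ)*a*z₀^2)) (by continuity) 2
  · exact aesm18 hα ha hz (fun t => 2*z₀*(3 + (t:ℂ)*a*z₀^2)) (by continuity) 3
  · apply MeasureTheory.ae_of_all
    intro t ht x hx
    rw [uIoc_of_le (by norm_num : (0:ℝ) ≤ 1)] at ht
    have hxr : ‖x‖ < r := hball x hx
    have hlb : 1 - r^2 < ‖1 - (t:ℂ)*a*x^2‖ := den18_lb ha hxr ht.1.le ht.2
    rw [norm_mul]
    apply mul_le_mul (g18_bound hα ht.1 ht.2) _ (norm_nonneg _) (by norm_num)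
    rw [norm_div, norm_mul, norm_mul, norm_pow]
    have h1 : ‖x‖ ≤ 1 := (lt_trans hxr hr1).le
    have h2 : ‖(3:ℂ) + (t:ℂ)*a*x^2‖ ≤ 4 := by
      calc ‖(3:ℂ) + (t:ℂ)*a*x^2‖ ≤ ‖(3:ℂ)‖ + ‖(t:ℂ)*a*x^2‖ := norm_add_le _ _
      _ ≤ 3 + 1 := by
          have hw := den18_abs ha (r := 1) (lt_trans hxr hr1) ht.1.le ht.2
          norm_num at hw ⊢
          linarith
      _ = 4 := by norm_num
    have h3 : ‖(2:ℂ)‖ = 2 := by norm_num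
    calc ‖(2:ℂ)‖*‖x‖*‖3 + (t:ℂ)*a*x^2‖/‖1 - (t:ℂ)*a*x^2‖^3 ≤ 2*1*4/(1-r^2)^3 := by
          apply div_le_div₀ (by norm_num) ?_ (by positivity)
            (pow_le_pow_left₀ hrpos.le hlb.le 3)
          rw [h3]
          nlinarith [norm_nonneg (3 + (t:ℂ)*a*x^2), norm_nonneg x]
    _ = 8*((1-r^2)⁻¹)^3 := by field_simp; ring
  · exact intervalIntegrable_const
  · apply MeasureTheory.ae_of_all
    intro t ht x hx
    rw [uIoc_of_le (by norm_num : (0:ℝ) ≤ 1)] at ht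
    have hx1 : ‖x‖ < 1 := lt_trans (hball x hx) hr1
    exact (hasDerivAt_u1 t x (den18_ne ha hx1 ht.1.le ht.2)).const_mul (g18 α t)


private lemma onesub18 {w : ℂ} (hw : ‖w‖ < 1) : (1:ℂ) - w ≠ 0 := by
  intro h
  have h1 : (1:ℂ) = w := by linear_combination h
  rw [← h1] at hw; simp at hw

private lemma tq_norm {q : ℂ} {t : ℝ} (ht0 : 0 ≤ t) (ht1 : t ≤ 1) : ‖(t:ℂ)*q‖ ≤ ‖q‖ := by
  rw [norm_mul, Complex.norm_real, Real.norm_eq_abs, _root_.abs_of_nonneg ht0]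
  nlinarith [norm_nonneg q]

private lemma cpow_deriv18 (c : ℂ) (hc : c ≠ 0) {t : ℝ} (ht : 0 < t) :
    HasDerivAt (fun y : ℝ => (y:ℂ)^c) (c * (t:ℂ)^(c-1)) t := by
  have hc1 : c - 1 ≠ -1 := by intro h; apply hc; linear_combination h
  have h := hasDerivAt_ofReal_cpow_const' (ne_of_gt ht) hc1
  rw [sub_add_cancel] at h
  have h2 : (fun y:ℝ => (y:ℂ)^c) = fun y:ℝ => c * ((y:ℂ)^c / c) := by
    funext y; field_simp
  rw [h2]
  exact h.const_mul c

private lemma ftc_core {α : ℂ} (hα : 0 < α.re) {q : ℂ} (hq : ‖q‖ < 1) :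
    ∫ t in (0:ℝ)..1, g18 α t * ((3+6*α+(2*α-4)*((t:ℂ)*q)+((t:ℂ)*q)^2)/(1-(t:ℂ)*q)^3)
      = 2*(1-α)/(1-q) := by
  have hα0 : α ≠ 0 := fun h => by simp [h] at hα
  have hs : 0 < (1/(2*α)).re := s18_re hα
  have hs1 : (1/(2*α) + 1) ≠ 0 := by
    intro h
    have := congrArg Complex.re h
    simp only [Complex.add_re, Complex.one_re, Complex.zero_re] at this
    linarith
  have hpos : 0 < α.re / Complex.normSq α := div_pos hα (Complex.normSq_pos.mpr hα0)
  have hs2 : (1/(2*α) + 2) ≠ 0 := by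
    intro h
    have := congrArg Complex.re h
    simp only [Complex.add_re, Complex.zero_re, Complex.re_ofNat] at this
    linarith
  have hdenq : ∀ {t : ℝ}, 0 ≤ t → t ≤ 1 → (1:ℂ) - (t:ℂ)*q ≠ 0 := fun ht0 ht1 =>
    onesub18 (lt_of_le_of_lt (tq_norm ht0 ht1) hq)
  set φ : ℝ → ℂ := fun t =>
    (2*(1+2*α)*(t:ℂ)^((3:ℂ)/2) - 2*(t:ℂ)^((5:ℂ)/2)*q - 6*α*(t:ℂ)^(1/(2*α)+1)
      + 2*α*(t:ℂ)^(1/(2*α)+2)*q)/(1-(t:ℂ)*q)^2 with hφdef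
  have hcont : ContinuousOn φ (Icc 0 1) := by
    have c1 : Continuous (fun t:ℝ => (t:ℂ)^((3:ℂ)/2)) :=
      continuous_ofReal_cpow_const (by norm_num)
    have c2 : Continuous (fun t:ℝ => (t:ℂ)^((5:ℂ)/2)) :=
      continuous_ofReal_cpow_const (by norm_num)
    have c3 : Continuous (fun t:ℝ => (t:ℂ)^(1/(2*α)+1)) :=
      continuous_ofReal_cpow_const
        (by simp only [Complex.add_re, Complex.one_re]; linarith)
    have c4 : Continuous (fun t:ℝ => (t:ℂ)^(1/(2*α)+2)) :=
      continuous_ofReal_cpow_const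
        (by simp only [Complex.add_re, Complex.re_ofNat]; linarith)
    have hnum : Continuous (fun t:ℝ =>
        2*(1+2*α)*(t:ℂ)^((3:ℂ)/2) - 2*(t:ℂ)^((5:ℂ)/2)*q - 6*α*(t:ℂ)^(1/(2*α)+1)
          + 2*α*(t:ℂ)^(1/(2*α)+2)*q) :=
      (((continuous_const.mul c1).sub ((continuous_const.mul c2).mul continuous_const)).sub
        (continuous_const.mul c3)).add ((continuous_const.mul c4).mul continuous_const)
    have hden : Continuous (fun t:ℝ => (1-(t:ℂ)*q)^2) :=
      ((continuous_const.sub (Complex.continuous_ofReal.mul continuous_const)).pow 2)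
    exact hnum.continuousOn.div hden.continuousOn
      (fun t ht => pow_ne_zero 2 (hdenq ht.1 ht.2))
  have hint : IntervalIntegrable
      (fun t => g18 α t * ((3+6*α+(2*α-4)*((t:ℂ)*q)+((t:ℂ)*q)^2)/(1-(t:ℂ)*q)^3))
      volume 0 1 := by
    apply ContinuousOn.intervalIntegrable
    rw [uIcc_of_le (by norm_num : (0:ℝ) ≤ 1)]
    apply (g18_cont hα).continuousOn.mul
    apply ContinuousOn.div
    · exact (by continuity : Continuous fun t:ℝ =>
        (3:ℂ)+6*α+(2*α-4)*((t:ℂ)*q)+((t:ℂ)*q)^2).continuousOn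
    · exact (by continuity : Continuous fun t:ℝ => (1-(t:ℂ)*q)^3).continuousOn
    · exact fun t ht => pow_ne_zero 3 (hdenq ht.1 ht.2)
  have hderiv : ∀ t ∈ Ioo (0:ℝ) 1, HasDerivWithinAt φ
      (g18 α t * ((3+6*α+(2*α-4)*((t:ℂ)*q)+((t:ℂ)*q)^2)/(1-(t:ℂ)*q)^3)) (Ioi t) t := by
    intro t ht
    have ht0 : 0 < t := ht.1
    have hT : ((t:ℝ):ℂ) ≠ 0 := by
      simp only [ne_eq, Complex.ofReal_eq_zero]; exact ne_of_gt ht0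
    have hd := hdenq ht0.le ht.2.le
    -- derivatives of the cpow pieces
    have h32 := cpow_deriv18 ((3:ℂ)/2) (by norm_num) ht0
    rw [show (3:ℂ)/2-1 = 1/2 by norm_num] at h32
    have h52 := cpow_deriv18 ((5:ℂ)/2) (by norm_num) ht0
    rw [show (5:ℂ)/2-1 = 3/2 by norm_num] at h52
    have hp1 := cpow_deriv18 (1/(2*α)+1) hs1 ht0
    rw [show (1/(2*α)+1)-1 = 1/(2*α) by ring] at hp1
    have hp2 := cpow_deriv18 (1/(2*α)+2) hs2 ht0
    rw [show (1/(2*α)+2)-1 = 1/(2*α)+1 by ring] at hp2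
    have hlin : HasDerivAt (fun y:ℝ => 1-(y:ℂ)*q) (-q) t := by
      have h0 : HasDerivAt (fun y:ℝ => ((y:ℝ):ℂ)) 1 t := by
        simpa using HasDerivAt.ofReal_comp (hasDerivAt_id t)
      simpa using (h0.mul_const q).const_sub 1
    have hden' : HasDerivAt (fun y:ℝ => (1-(y:ℂ)*q)^2)
        ((-q)*(1-(t:ℂ)*q)+(1-(t:ℂ)*q)*(-q)) t := by
      have hsq : (fun y:ℝ => (1-(y:ℂ)*q)^2) = fun y:ℝ => (1-(y:ℂ)*q)*(1-(y:ℂ)*q) := by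
        funext y; ring
      rw [hsq]; exact hlin.mul hlin
    have hnum' := (((h32.const_mul (2*(1+2*α))).fun_sub
        ((h52.const_mul 2).mul_const q)).fun_sub (hp1.const_mul (6*α))).fun_add
        ((hp2.const_mul (2*α)).mul_const q)
    have hφ' := hnum'.fun_div hden' (pow_ne_zero 2 hd)
    apply HasDerivAt.hasDerivWithinAt
    have heq : φ = fun t:ℝ =>
        (2*(1+2*α)*(t:ℂ)^((3:ℂ)/2) - 2*(t:ℂ)^((5:ℂ)/2)*q - 6*α*(t:ℂ)^(1/(2*α)+1)
          + 2*α*(t:ℂ)^(1/(2*α)+2)*q)/(1-(t:ℂ)*q)^2 := hφdef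
    rw [heq]
    refine hφ'.congr_deriv ?_
    -- algebraic identity
    have e1 : ((t:ℝ):ℂ)^((3:ℂ)/2) = (t:ℂ)^((1:ℂ)/2) * (t:ℂ) := by
      rw [show (3:ℂ)/2 = 1/2 + 1 by norm_num, Complex.cpow_add _ _ hT, Complex.cpow_one]
    have e2 : ((t:ℝ):ℂ)^((5:ℂ)/2) = (t:ℂ)^((1:ℂ)/2) * (t:ℂ)^2 := by
      rw [show (5:ℂ)/2 = 1/2 + 2 by norm_num, Complex.cpow_add _ _ hT,
        show (2:ℂ) = ((2:ℕ):ℂ) by norm_num, Complex.cpow_natCast]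
    have e3 : ((t:ℝ):ℂ)^((1:ℂ)/(2*α)+1) = (t:ℂ)^((1:ℂ)/(2*α)) * (t:ℂ) := by
      rw [Complex.cpow_add _ _ hT, Complex.cpow_one]
    have e4 : ((t:ℝ):ℂ)^((1:ℂ)/(2*α)+2) = (t:ℂ)^((1:ℂ)/(2*α)) * (t:ℂ)^2 := by
      rw [Complex.cpow_add _ _ hT, show (2:ℂ) = ((2:ℕ):ℂ) by norm_num,
        Complex.cpow_natCast]
    simp only [g18, e1, e2, e3, e4]
    push_cast
    field_simp
    ring
  have key := intervalIntegral.integral_eq_sub_of_hasDeriv_right_of_le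
    (by norm_num : (0:ℝ) ≤ 1) hcont hderiv hint
  rw [key]
  have h0 : φ 0 = 0 := by
    rw [hφdef]
    push_cast
    rw [Complex.zero_cpow (by norm_num : ((3:ℂ)/2) ≠ 0),
      Complex.zero_cpow (by norm_num : ((5:ℂ)/2) ≠ 0),
      Complex.zero_cpow hs1, Complex.zero_cpow hs2]
    simp
  have h1 : φ 1 = (2*(1+2*α) - 2*q - 6*α + 2*α*q)/(1-q)^2 := by
    rw [hφdef]
    push_cast
    rw [Complex.one_cpow, Complex.one_cpow, Complex.one_cpow, Complex.one_cpow]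
    simp
  rw [h0, h1]
  have hq1 : (1:ℂ) - q ≠ 0 := onesub18 hq
  field_simp
  ring


private lemma ftc18 {α a : ℂ} (hα : 0 < α.re) (ha : ‖a‖ ≤ 1) {z : ℂ}
    (hz : ‖z‖ < 1) :
    J1 α a z + α*z*(J2 α a z) = 2*(1-α)*z^2/(1-a*z^2) := by
  have hi1 := (derivA hα ha hz).1
  have hi2 := (derivB hα ha hz).1
  have ha' : ‖a‖ ≤ 1 := ha
  have hq : ‖a*z^2‖ < 1 := by
    rw [norm_mul, norm_pow]
    nlinarith [norm_nonneg a, norm_nonneg z]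
  simp only [J1, J2]
  rw [← intervalIntegral.integral_const_mul, ← intervalIntegral.integral_add hi1
    (hi2.const_mul (α*z))]
  have hcong : EqOn
      (fun t : ℝ => g18 α t * (z^2*(3 - (t:ℂ)*a*z^2)/(1-(t:ℂ)*a*z^2)^2)
        + (α*z)*(g18 α t * (2*z*(3 + (t:ℂ)*a*z^2)/(1-(t:ℂ)*a*z^2)^3)))
      (fun t : ℝ => z^2 * (g18 α t *
        ((3+6*α+(2*α-4)*((t:ℂ)*(a*z^2))+((t:ℂ)*(a*z^2))^2)/(1-(t:ℂ)*(a*z^2))^3)))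
      (uIcc (0:ℝ) 1) := by
    intro t ht
    rw [uIcc_of_le (by norm_num : (0:ℝ) ≤ 1)] at ht
    have hd : 1 - (t:ℂ)*a*z^2 ≠ 0 := den18_ne ha hz ht.1 ht.2
    have hd' : 1 - (t:ℂ)*(a*z^2) ≠ 0 := by rw [← mul_assoc]; exact hd
    simp only
    field_simp
    ring
  rw [intervalIntegral.integral_congr hcong, intervalIntegral.integral_const_mul,
    ftc_core hα hq]
  ring

end Aux18

theorem stmt_18 (β : ℝ) (hβ0 : 0 ≤ β) (hβ1 : β < 1)
    (α : ℂ) (hα : 0 < α.re) (hα1 : α ≠ 1)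
    (a : ℂ) (ha : ‖a‖ ≤ 1)
    (F : ℂ → ℂ)
    (hF : ∀ z, F z = z + ((1 - β) * a * z^3 / (1 - α)) *
      ∫ t in (0:ℝ)..1, ((t:ℂ) ^ ((1:ℂ)/2) - (t:ℂ) ^ (1/(2*α))) / (1 - (t:ℂ) * a * z^2)) :
    ∀ z ∈ ball (0:ℂ) 1,
      deriv F z + α * z * deriv (deriv F) z = (1 + (1 - 2*β) * a * z^2) / (1 - a * z^2) := by
  intro z hz
  rw [mem_ball_zero_iff] at hz
  have ha' : ‖a‖ ≤ 1 := ha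
  set K : ℂ := (1-(β:ℂ))*a/(1-α) with hK
  have hFeq : F = fun x => x + K * ∫ t in (0:ℝ)..1, g18 α t * (x^3/(1 - (t:ℂ)*a*x^2)) := by
    funext x
    rw [hF x]
    have hrw : (fun t : ℝ => g18 α t * (x^3/(1 - (t:ℂ)*a*x^2)))
        = fun t : ℝ => x^3 * (((t:ℂ) ^ ((1:ℂ)/2) - (t:ℂ) ^ (1/(2*α))) / (1 - (t:ℂ)*a*x^2)) := by
      funext t; simp only [g18]; ring
    rw [hrw, intervalIntegral.integral_const_mul, hK]
    ring
  have hDF : ∀ x : ℂ, ‖x‖ < 1 → HasDerivAt F (1 + K * J1 α a x) x := by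
    intro x hx
    rw [hFeq]
    exact (hasDerivAt_id x).add (((derivA hα ha hx).2).const_mul K)
  have hdF : ∀ x ∈ ball (0:ℂ) 1, deriv F x = 1 + K * J1 α a x := by
    intro x hx
    rw [mem_ball_zero_iff] at hx
    exact (hDF x hx).deriv
  have hev : deriv F =ᶠ[nhds z] fun x => 1 + K * J1 α a x :=
    Filter.eventuallyEq_of_mem (isOpen_ball.mem_nhds (mem_ball_zero_iff.mpr hz)) hdF
  have hD2 : deriv (deriv F) z = K * J2 α a z := by
    rw [hev.deriv_eq]
    exact (((derivB hα ha hz).2.const_mul K).const_add 1).deriv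
  rw [hdF z (mem_ball_zero_iff.mpr hz), hD2]
  have hsum := ftc18 hα ha hz
  have hqn : ‖a*z^2‖ < 1 := by
    rw [norm_mul, norm_pow]
    nlinarith [norm_nonneg a, norm_nonneg z]
  have hden : (1:ℂ) - a*z^2 ≠ 0 := onesub18 hqn
  have h1α : (1:ℂ) - α ≠ 0 := sub_ne_zero.mpr (Ne.symm hα1)
  have hre : 1 + K*(J1 α a z) + α*z*(K*(J2 α a z))
      = 1 + K*((J1 α a z) + α*z*(J2 α a z)) := by ring
  rw [hre, hsum, hK]
  field_simp
  ring
end
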